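/- Under gradient flow over the hierarchical tensor factorization objective, for all ν ∈ int(T), r ∈ [R_ν], vectors w, w' ∈ LC(ν,r), and all t ≥ 0: ‖w(t)‖² − ‖w'(t)‖² = ‖w(0)‖² − ‖w'(0)‖², i.e., the differences between squared norms of weight vectors in the same local component are constant through time. -/

import Mathlib

namespace HTF

/-- Rooted tree whose leaves are labeled by elements of `Fin N`. -/
inductive MTree (N : ℕ) : Type
  | leaf : Fin N → MTree N
  | node : List (MTree N) → MTree N

noncomputable instance {N : ℕ} : DecidableEq (MTree N) := fun _ _ => Classical.dec _

namespace MTree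

variable {N : ℕ}

/-- The list of leaf labels of the tree. -/
def leafList : MTree N → List (Fin N)
  | .leaf i => [i]
  | .node ts => ts.attach.flatMap fun t => t.1.leafList
decreasing_by simp only [MTree.node.sizeOf_spec]; have := List.sizeOf_lt_of_mem t.2; omega

/-- The label of a node: set of leaf indices appearing in its subtree. -/
def label (t : MTree N) : Finset (Fin N) := t.leafList.toFinset

/-- All nodes (subtrees) of the tree. -/
def nodes : MTree N → List (MTree N)
  | .leaf i => [.leaf i]
  | .node ts => .node ts :: ts.attach.flatMap fun t => t.1.nodes
decreasing_by simp only [MTree.node.sizeOf_spec]; have := List.sizeOf_lt_of_mem t.2; omega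

/-- The children of a node. -/
def children : MTree N → List (MTree N)
  | .leaf _ => []
  | .node ts => ts

/-- Interior (non-leaf) node. -/
def IsInterior : MTree N → Prop
  | .leaf _ => False
  | .node _ => True

/-- Every non-leaf node has at least one child. -/
def Branching : MTree N → Prop
  | .leaf _ => True
  | .node ts => ts ≠ [] ∧ ∀ t ∈ ts.attach, Branching t.1
decreasing_by simp only [MTree.node.sizeOf_spec]; have := List.sizeOf_lt_of_mem t.2; omega

/-- A valid mode tree over `[N]`: it has exactly `N` leaves, labeled `{1},...,{N}`
(each index appearing exactly once), and interior nodes have children. -/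
def Valid (t : MTree N) : Prop :=
  t.leafList.Nodup ∧ (∀ i : Fin N, i ∈ t.leafList) ∧ t.Branching

/-- The parent of node `ν` in the tree (first argument), if it exists. -/
noncomputable def parentIn : MTree N → MTree N → Option (MTree N)
  | .leaf _, _ => none
  | .node ts, ν =>
      if ν ∈ ts then some (.node ts)
      else ts.attach.findSome? fun t => parentIn t.1 ν
termination_by T _ => sizeOf T
decreasing_by simp only [MTree.node.sizeOf_spec]; have := List.sizeOf_lt_of_mem t.2; omega

end MTree

open MTree

variable {N : ℕ} (D : Fin N → ℕ)

/-- Full index set of an order-`N` tensor with mode dimensions `D`. -/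
abbrev Idx : Type := ∀ n, Fin (D n)

/-- The intermediate tensors `W^(ν,r)` of a hierarchical tensor factorization with
local-component numbers `R` and weight matrices `W` (columns indexed by `ℕ`).
An order-`|label ν|` tensor is represented as a function of a full index tuple that
only depends on the coordinates in `label ν`; with this representation, the tensor
product of tensors over disjoint mode sets is pointwise multiplication and the mode
permutation `π_ν` is the identity. -/
noncomputable def interm (R : MTree N → ℕ) (W : ∀ ν : MTree N, Fin (R ν) → ℕ → ℝ) :
    MTree N → ℕ → Idx D → ℝ
  | .leaf i, r => fun x =>
      if h : R (.leaf i) = D i then W (.leaf i) (Fin.cast h.symm (x i)) r else 0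
  | .node ts, r => fun x =>
      ∑ r' : Fin (R (.node ts)),
        W (.node ts) r' r * (ts.attach.map fun t => interm R W t.1 (r' : ℕ) x).prod
decreasing_by simp only [MTree.node.sizeOf_spec]; have := List.sizeOf_lt_of_mem t.2; omega

/-- The end tensor `W_H` of the hierarchical tensor factorization with mode tree `T`. -/
noncomputable def endT (R : MTree N → ℕ) (W : ∀ ν : MTree N, Fin (R ν) → ℕ → ℝ)
    (T : MTree N) : Idx D → ℝ :=
  interm D R W T 0

/-- Entry `(i, j)` of the weight matrix at node `ν` (zero outside the row range). -/
noncomputable def went (R : MTree N → ℕ) (W : ∀ ν : MTree N, Fin (R ν) → ℕ → ℝ)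
    (ν : MTree N) (i j : ℕ) : ℝ :=
  if h : i < R ν then W ν ⟨i, h⟩ j else 0

/-- `R_{Pa(ν)}` : the number of local components at the parent of `ν` in `T`
(`1` if `ν` is the root). -/
noncomputable def Rpar (R : MTree N → ℕ) (T ν : MTree N) : ℕ :=
  if ν = T then 1 else ((parentIn T ν).map R).getD 0

/-- Replace the weight matrix at node `μ` by `A`, keeping all other weight matrices. -/
noncomputable def replace (R : MTree N → ℕ) (W : ∀ ν : MTree N, Fin (R ν) → ℕ → ℝ)
    (μ : MTree N) (A : Fin (R μ) → ℕ → ℝ) : ∀ ν : MTree N, Fin (R ν) → ℕ → ℝ :=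
  fun ν => if h : ν = μ then fun i j => A (Fin.cast (congrArg R h) i) j else W ν

/-- Frobenius (Euclidean) inner product of order-`N` tensors. -/
noncomputable def tinner (A B : Idx D → ℝ) : ℝ := ∑ x, A x * B x

/-- Frobenius norm of an order-`N` tensor. -/
noncomputable def tnorm (A : Idx D → ℝ) : ℝ := Real.sqrt (∑ x, (A x) ^ 2)

/-- Frobenius norm of an order-`|s|` tensor represented as a function of a full index
tuple depending only on the coordinates in `s` (so that the sum over the full index
set over-counts each entry `∏_{n ∉ s} D n` times). -/
noncomputable def rnorm (s : Finset (Fin N)) (A : Idx D → ℝ) : ℝ :=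
  Real.sqrt ((∑ x, (A x) ^ 2) / ∏ n ∈ sᶜ, (D n : ℝ))

/-- Squared norm of the `r`'th column of the weight matrix at node `c`. -/
noncomputable def colSq (R : MTree N → ℕ) (W : ∀ ν : MTree N, Fin (R ν) → ℕ → ℝ)
    (c : MTree N) (r : ℕ) : ℝ :=
  ∑ i : Fin (R c), (W c i r) ^ 2

/-- Squared norm of the `r`'th row of the weight matrix at node `ν` of `T`. -/
noncomputable def rowSq (R : MTree N → ℕ) (W : ∀ ν : MTree N, Fin (R ν) → ℕ → ℝ)
    (T ν : MTree N) (r : ℕ) : ℝ :=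
  ∑ j : Fin (Rpar R T ν), (went R W ν r (j : ℕ)) ^ 2

/-- `σ^(ν,r)` : the norm of the `(ν,r)`'th local component, i.e. the product of the
norms of the vectors in `LC(ν,r)` (the `r`'th row of `W^(ν)` together with the `r`'th
columns of the weight matrices of the children of `ν`). -/
noncomputable def sigmaLoc (R : MTree N → ℕ) (W : ∀ ν : MTree N, Fin (R ν) → ℕ → ℝ)
    (T ν : MTree N) (r : ℕ) : ℝ :=
  Real.sqrt (rowSq R W T ν r) * (ν.children.map fun c => Real.sqrt (colSq R W c r)).prod

/-- `PadR_r(W^(ν)_{r,:})` : the matrix whose `r`'th row is the `r`'th row of `W^(ν)`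
and whose other rows are zero. -/
noncomputable def padRow (R : MTree N → ℕ) (W : ∀ ν : MTree N, Fin (R ν) → ℕ → ℝ)
    (ν : MTree N) (r : ℕ) : Fin (R ν) → ℕ → ℝ :=
  fun i j => if (i : ℕ) = r then W ν i j else 0

/-- `PadC_r(W^(c)_{:,r})` : the matrix whose `r`'th column is the `r`'th column of
`W^(c)` and whose other columns are zero. -/
noncomputable def padCol (R : MTree N → ℕ) (W : ∀ ν : MTree N, Fin (R ν) → ℕ → ℝ)
    (c : MTree N) (r : ℕ) : Fin (R c) → ℕ → ℝ :=
  fun i j => if j = r then W c i r else 0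

/-- `Ĉ^(ν,r)` : the end tensor obtained by normalizing the `r`'th local component at
`ν` and setting all other local components at `ν` to zero, i.e. the end tensor computed
with `W^(ν)` replaced by `σ^{-1} · PadR_r(W^(ν)_{r,:})` (and `0` if `σ^(ν,r) = 0`). -/
noncomputable def hatC (R : MTree N → ℕ) (W : ∀ ν : MTree N, Fin (R ν) → ℕ → ℝ)
    (T ν : MTree N) (r : ℕ) : Idx D → ℝ :=
  if sigmaLoc R W T ν r = 0 then 0
  else endT D R (replace R W ν fun i j =>
    if (i : ℕ) = r then (sigmaLoc R W T ν r)⁻¹ * W ν i j else 0) T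

/-- The objective `φ_H = L_H ∘ (end tensor)`. -/
noncomputable def obj (L : (Idx D → ℝ) → ℝ) (R : MTree N → ℕ) (T : MTree N)
    (W : ∀ ν : MTree N, Fin (R ν) → ℕ → ℝ) : ℝ :=
  L (endT D R W T)

/-- Update the single entry `(i, j)` of the weight matrix at node `μ` to the value `s`. -/
noncomputable def upd (R : MTree N → ℕ) (W : ∀ ν : MTree N, Fin (R ν) → ℕ → ℝ)
    (μ : MTree N) (i j : ℕ) (s : ℝ) : ∀ ν : MTree N, Fin (R ν) → ℕ → ℝ :=
  fun ν i' j' => if ν = μ ∧ (i' : ℕ) = i ∧ j' = j then s else W ν i' j'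

/-- `∂φ_H/∂W^(μ)_{i,j}` : the partial derivative of the objective with respect to the
`(i,j)` entry of the weight matrix at node `μ`, at the point `W`. -/
noncomputable def dObj (L : (Idx D → ℝ) → ℝ) (R : MTree N → ℕ) (T : MTree N)
    (W : ∀ ν : MTree N, Fin (R ν) → ℕ → ℝ) (μ : MTree N) (i j : ℕ) : ℝ :=
  deriv (fun s : ℝ => obj D L R T (upd R W μ i j s)) (went R W μ i j)

/-- `∇L(A)` : the gradient of a loss over tensors, entrywise. -/
noncomputable def tgrad (L : (Idx D → ℝ) → ℝ) (A : Idx D → ℝ) : Idx D → ℝ :=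
  fun x => deriv (fun s : ℝ => L (Function.update A x s)) (A x)

/-- Local smoothness of the loss: its gradient is Lipschitz on compact sets. -/
def LocSmooth (L : (Idx D → ℝ) → ℝ) : Prop :=
  ∀ K : Set (Idx D → ℝ), IsCompact K → ∃ β : NNReal, LipschitzOnWith β (tgrad D L) K

/-- Gradient flow over the objective: each entry of each weight matrix moves against
its partial derivative. -/
def GradFlow (L : (Idx D → ℝ) → ℝ) (R : MTree N → ℕ) (T : MTree N)
    (Wt : ℝ → ∀ ν : MTree N, Fin (R ν) → ℕ → ℝ) : Prop :=
  ∀ (ν : MTree N) (i : Fin (R ν)) (j : ℕ) (t : ℝ), 0 ≤ t →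
    HasDerivAt (fun s : ℝ => Wt s ν i j) (- dObj D L R T (Wt t) ν (i : ℕ) j) t

/-- The matricization of an order-`N` tensor according to the index set `I` : the
matrix whose rows are indexed by the modes in `I` and whose columns are indexed by the
remaining modes. -/
noncomputable def matricize (I : Finset (Fin N)) (A : Idx D → ℝ) :
    Matrix (∀ i : {n // n ∈ I}, Fin (D i)) (∀ j : {n // n ∉ I}, Fin (D j)) ℝ :=
  fun ρ κ => A fun n => if h : n ∈ I then ρ ⟨n, h⟩ else κ ⟨n, h⟩

/-- Frobenius norm of the weight matrix `W^(ν) ∈ ℝ^{R_ν × R_{Pa(ν)}}` at node `ν` of `T`. -/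
noncomputable def wFro (R : MTree N → ℕ) (W : ∀ ν : MTree N, Fin (R ν) → ℕ → ℝ)
    (T ν : MTree N) : ℝ :=
  Real.sqrt (∑ i : Fin (R ν), ∑ j : Fin (Rpar R T ν), (W ν i (j : ℕ)) ^ 2)

/-- The weights obtained by pruning the `(ν,r)`'th local component: the `r`'th row of
`W^(ν)` and the `r`'th column of `W^(c)` for every child `c` of `ν` are set to zero. -/
noncomputable def pruneLC (R : MTree N → ℕ) (W : ∀ ν : MTree N, Fin (R ν) → ℕ → ℝ)
    (ν : MTree N) (r : ℕ) : ∀ μ : MTree N, Fin (R μ) → ℕ → ℝ :=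
  fun μ i j =>
    if μ = ν ∧ (i : ℕ) = r then 0
    else if μ ∈ ν.children ∧ j = r then 0
    else W μ i j

end HTF

/-!
Fix an interior node `ν`, a child `c` of `ν` and `r < R_ν`. The end tensor is linear in each
weight matrix separately (in the entries it actually reads), and keeping only the `r`'th row of
`W^(ν)` gives the same end tensor as keeping only the `r`'th column of `W^(c)`: both isolate the
`(ν,r)`'th local component. Hence `∑_j W^(ν)_{r,j} ∂φ/∂W^(ν)_{r,j}` and
`∑_i W^(c)_{i,r} ∂φ/∂W^(c)_{i,r}` are the same directional derivative of `L` at `W_H`, so along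
gradient flow `‖W^(ν)_{r,:}‖²` and `‖W^(c)_{:,r}‖²` have the same time derivative.
-/

namespace HTF

namespace MTree

variable {N : ℕ}

@[elab_as_elim]
theorem induction {motive : MTree N → Prop} (leaf : ∀ i, motive (.leaf i))
    (node : ∀ ts, (∀ t ∈ ts, motive t) → motive (.node ts)) (t : MTree N) : motive t :=
  nodes.induct motive leaf (fun ts ih => node ts fun t ht => ih ⟨t, ht⟩) t

theorem nodes_leaf (i : Fin N) : (leaf i).nodes = [leaf i] := by
  rw [nodes]

theorem nodes_node (ts : List (MTree N)) : (node ts).nodes = node ts :: ts.flatMap nodes := by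
  rw [nodes]; simp

theorem leafList_node (ts : List (MTree N)) : (node ts).leafList = ts.flatMap leafList := by
  rw [leafList]; simp

theorem branching_node {ts : List (MTree N)} :
    (node ts).Branching ↔ ts ≠ [] ∧ ∀ t ∈ ts, t.Branching := by
  rw [Branching]; simp

theorem mem_nodes_self (t : MTree N) : t ∈ t.nodes := by
  cases t <;> simp [nodes_leaf, nodes_node]

theorem mem_nodes_of_mem_children {ν c : MTree N} (hc : c ∈ ν.children) : c ∈ ν.nodes := by
  cases ν with
  | leaf i => simp [children] at hc
  | node ts =>
    rw [children] at hc
    rw [nodes_node]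
    exact List.mem_cons_of_mem _ (List.mem_flatMap.2 ⟨c, hc, mem_nodes_self c⟩)

theorem mem_nodes_trans {t μ ρ : MTree N} (hρ : ρ ∈ μ.nodes) (hμ : μ ∈ t.nodes) :
    ρ ∈ t.nodes := by
  induction t using MTree.induction with
  | leaf i =>
    rw [nodes_leaf, List.mem_singleton] at hμ
    exact hμ ▸ hρ
  | node ts ih =>
    rw [nodes_node, List.mem_cons, List.mem_flatMap] at hμ ⊢
    rcases hμ with rfl | ⟨t, ht, hμt⟩
    · simpa [nodes_node] using hρ
    · exact Or.inr ⟨t, ht, ih t ht hμt⟩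

theorem sizeOf_le_of_mem_nodes {t ρ : MTree N} (h : ρ ∈ t.nodes) : sizeOf ρ ≤ sizeOf t := by
  induction t using MTree.induction with
  | leaf i =>
    rw [nodes_leaf, List.mem_singleton] at h
    rw [h]
  | node ts ih =>
    rw [nodes_node, List.mem_cons, List.mem_flatMap] at h
    rcases h with rfl | ⟨t, ht, hρt⟩
    · rfl
    · have := List.sizeOf_lt_of_mem ht
      have := ih t ht hρt
      simp only [node.sizeOf_spec]
      omega

theorem sizeOf_lt_of_mem_children {ν c : MTree N} (hc : c ∈ ν.children) :
    sizeOf c < sizeOf ν := by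
  cases ν with
  | leaf i => simp [children] at hc
  | node ts =>
    rw [children] at hc
    have := List.sizeOf_lt_of_mem hc
    simp only [node.sizeOf_spec]
    omega

theorem notMem_nodes_of_mem_children {ν c : MTree N} (hc : c ∈ ν.children) :
    ν ∉ c.nodes := fun h =>
  (sizeOf_le_of_mem_nodes h).not_gt (sizeOf_lt_of_mem_children hc)

@[elab_as_elim]
theorem nodes_induction {T : MTree N} {P : MTree N → Prop} (root : P T)
    (step : ∀ ν ∈ T.nodes, P ν → ∀ c ∈ ν.children, P c) : ∀ μ ∈ T.nodes, P μ := by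
  induction T using MTree.induction with
  | leaf i =>
    intro μ hμ
    rw [nodes_leaf, List.mem_singleton] at hμ
    exact hμ ▸ root
  | node ts ih =>
    intro μ hμ
    rw [nodes_node, List.mem_cons, List.mem_flatMap] at hμ
    rcases hμ with rfl | ⟨t, ht, hμt⟩
    · exact root
    · refine ih t ht (step _ (mem_nodes_self _) root t ht) (fun ν hν => ?_) μ hμt
      exact step ν (mem_nodes_trans hν (mem_nodes_of_mem_children ht))

theorem leafList_ne_nil {t : MTree N} (h : t.Branching) : t.leafList ≠ [] := by
  induction t using MTree.induction with
  | leaf i => simp [leafList]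
  | node ts ih =>
    obtain ⟨hne, hts⟩ := branching_node.1 h
    obtain ⟨t, ht⟩ := List.exists_mem_of_ne_nil ts hne
    rw [leafList_node, Ne, List.flatMap_eq_nil_iff]
    exact fun hall => ih t ht (hts t ht) (hall t ht)

theorem leafList_subset_of_mem_children {ν c : MTree N} (hc : c ∈ ν.children) :
    c.leafList ⊆ ν.leafList := by
  cases ν with
  | leaf i => simp [children] at hc
  | node ts =>
    rw [leafList_node]
    exact fun i hi => List.mem_flatMap.2 ⟨c, hc, hi⟩

theorem leafList_subset_of_mem_nodes {t ρ : MTree N} (h : ρ ∈ t.nodes) :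
    ρ.leafList ⊆ t.leafList :=
  nodes_induction (List.Subset.refl _)
    (fun _ _ hν _ hc => List.Subset.trans (leafList_subset_of_mem_children hc) hν) ρ h

/-- Distinct leaves and nonempty interior nodes: this makes the subtrees of distinct
children disjoint, so that every node occurs at a single position of the tree. -/
def WellFormed (t : MTree N) : Prop :=
  t.leafList.Nodup ∧ t.Branching

theorem Valid.wellFormed {t : MTree N} (h : t.Valid) : t.WellFormed :=
  ⟨h.1, h.2.2⟩

theorem WellFormed.of_mem_children {ν c : MTree N} (h : ν.WellFormed) (hc : c ∈ ν.children) :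
    c.WellFormed := by
  cases ν with
  | leaf i => simp [children] at hc
  | node ts =>
    rw [WellFormed, leafList_node, List.nodup_flatMap] at h
    exact ⟨h.1.1 c hc, (branching_node.1 h.2).2 c hc⟩

theorem WellFormed.of_mem_nodes {t ρ : MTree N} (h : t.WellFormed) (hρ : ρ ∈ t.nodes) :
    ρ.WellFormed :=
  nodes_induction h (fun _ _ hν _ hc => hν.of_mem_children hc) ρ hρ

theorem WellFormed.pairwise_disjoint {ν : MTree N} (h : ν.WellFormed) :
    ν.children.Pairwise (Function.onFun List.Disjoint leafList) := by
  cases ν with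
  | leaf i => simp [children]
  | node ts =>
    rw [WellFormed, leafList_node, List.nodup_flatMap] at h
    exact h.1.2

theorem WellFormed.nodup_children {ν : MTree N} (h : ν.WellFormed) : ν.children.Nodup :=
  h.pairwise_disjoint.imp_of_mem fun ha _ hd heq => by
    subst heq
    obtain ⟨i, hi⟩ := List.exists_mem_of_ne_nil _ (leafList_ne_nil (h.of_mem_children ha).2)
    exact hd hi hi

theorem WellFormed.notMem_nodes_of_ne {ν a b ρ : MTree N} (h : ν.WellFormed)
    (ha : a ∈ ν.children) (hb : b ∈ ν.children) (hab : a ≠ b) (hρ : ρ ∈ a.nodes) :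
    ρ ∉ b.nodes := fun hρb => by
  have hne := leafList_ne_nil ((h.of_mem_children ha).of_mem_nodes hρ).2
  obtain ⟨i, hi⟩ := List.exists_mem_of_ne_nil _ hne
  have : Std.Symm (Function.onFun List.Disjoint (leafList (N := N))) := ⟨fun _ _ h => h.symm⟩
  have hd : List.Disjoint a.leafList b.leafList := h.pairwise_disjoint.forall ha hb hab
  exact hd (leafList_subset_of_mem_nodes hρ hi) (leafList_subset_of_mem_nodes hρb hi)

theorem parentIn_eq_none {t ν : MTree N} (h : ν ∉ t.nodes) : parentIn t ν = none := by
  induction t using MTree.induction with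
  | leaf i => rw [parentIn]
  | node ts ih =>
    rw [parentIn, if_neg (show ν ∉ ts from fun hν => h (mem_nodes_of_mem_children hν)),
      List.findSome?_eq_none_iff]
    exact fun t _ => ih t.1 t.2 fun hν => h (mem_nodes_trans hν (mem_nodes_of_mem_children t.2))

theorem WellFormed.parentIn_eq {T ν c : MTree N} (hT : T.WellFormed) (hν : ν ∈ T.nodes)
    (hc : c ∈ ν.children) : parentIn T c = some ν := by
  induction T using MTree.induction with
  | leaf i =>
    rw [nodes_leaf, List.mem_singleton] at hν
    subst hν
    simp [children] at hc
  | node ts ih =>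
    rw [nodes_node, List.mem_cons, List.mem_flatMap] at hν
    rcases hν with rfl | ⟨t₀, ht₀, hνt₀⟩
    · rw [parentIn, if_pos (show c ∈ ts from hc)]
    have hct₀ : c ∈ t₀.nodes := mem_nodes_trans (mem_nodes_of_mem_children hc) hνt₀
    have hcts : c ∉ ts := fun hcts => by
      by_cases hct : c = t₀
      · exact notMem_nodes_of_mem_children hc (hct ▸ hνt₀)
      · exact hT.notMem_nodes_of_ne ht₀ hcts (Ne.symm hct) hct₀ (mem_nodes_self c)
    have hsub : ∀ t : {t // t ∈ ts}, parentIn t.1 c = none ∨ parentIn t.1 c = some ν := by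
      rintro ⟨t, ht⟩
      by_cases htt₀ : t = t₀
      · subst htt₀
        exact Or.inr (ih t ht (hT.of_mem_children ht) hνt₀)
      · exact Or.inl (parentIn_eq_none (hT.notMem_nodes_of_ne ht₀ ht (Ne.symm htt₀) hct₀))
    have hsome : (ts.attach.findSome? fun t => parentIn t.1 c).isSome := by
      refine List.findSome?_isSome_iff.2 ⟨⟨t₀, ht₀⟩, List.mem_attach _ _, ?_⟩
      rw [ih t₀ ht₀ (hT.of_mem_children ht₀) hνt₀]
      rfl
    obtain ⟨p, hp⟩ := Option.isSome_iff_exists.1 hsome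
    obtain ⟨t, -, ht⟩ := List.exists_of_findSome?_eq_some hp
    rw [parentIn, if_neg hcts, hp]
    rcases hsub t with h | h <;> rw [h] at ht
    · cases ht
    · exact ht.symm

end MTree

open MTree

variable {N : ℕ}

theorem Rpar_self (R : MTree N → ℕ) (T : MTree N) : Rpar R T T = 1 :=
  if_pos rfl

theorem Rpar_of_mem_children (R : MTree N → ℕ) {T ν c : MTree N} (hT : T.WellFormed)
    (hν : ν ∈ T.nodes) (hc : c ∈ ν.children) : Rpar R T c = R ν := by
  have hcT : c ≠ T := fun h =>
    (sizeOf_le_of_mem_nodes hν).not_gt (h ▸ sizeOf_lt_of_mem_children hc)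
  rw [Rpar, if_neg hcT, hT.parentIn_eq hν hc]
  rfl

variable {D : Fin N → ℕ} {L : (Idx D → ℝ) → ℝ} {R : MTree N → ℕ}

section Replace

variable (W : ∀ ν : MTree N, Fin (R ν) → ℕ → ℝ) (μ : MTree N)

theorem replace_self (A : Fin (R μ) → ℕ → ℝ) : replace R W μ A μ = A := by
  funext i j
  simp [replace]

theorem replace_ne (A : Fin (R μ) → ℕ → ℝ) {ρ : MTree N} (h : ρ ≠ μ) :
    replace R W μ A ρ = W ρ := by
  simp [replace, h]

theorem replace_eq_self : replace R W μ (W μ) = W := by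
  funext ρ
  by_cases h : ρ = μ
  · subst h
    exact replace_self W ρ _
  · exact replace_ne W μ _ h

theorem upd_eq_replace (i j : ℕ) (s : ℝ) :
    upd R W μ i j s = replace R W μ fun i' j' => if (i' : ℕ) = i ∧ j' = j then s else W μ i' j' := by
  funext ρ i' j'
  by_cases h : ρ = μ
  · subst h
    simp [upd, replace_self]
  · simp [upd, replace_ne W μ _ h, h]

end Replace

/-- `⊗_{c ∈ C(ν)} W^(c,r)` at an interior node `ν`; at a leaf `{n}`, the `r`'th standard basis
vector of `ℝ^{D_n}`. In both cases `W^(ν,k) = ∑_r W^(ν)_{r,k} · localTensor ν r`. -/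
noncomputable def localTensor (D : Fin N → ℕ) (R : MTree N → ℕ)
    (W : ∀ ν : MTree N, Fin (R ν) → ℕ → ℝ) : MTree N → ℕ → Idx D → ℝ
  | .leaf i, r, x => if R (.leaf i) = D i ∧ r = (x i : ℕ) then 1 else 0
  | .node ts, r, x => (ts.map fun t => interm D R W t r x).prod

theorem interm_eq_sum_localTensor (W : ∀ ν : MTree N, Fin (R ν) → ℕ → ℝ) (ν : MTree N)
    (k : ℕ) (x : Idx D) :
    interm D R W ν k x = ∑ r : Fin (R ν), W ν r k * localTensor D R W ν r x := by
  cases ν with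
  | leaf i =>
    rw [interm]
    beta_reduce
    by_cases h : R (.leaf i) = D i
    · rw [dif_pos h, Finset.sum_eq_single (Fin.cast h.symm (x i))]
      · simp [localTensor, h]
      · intro r _ hr
        simp only [localTensor, h, true_and, mul_ite, mul_one, mul_zero, ite_eq_right_iff]
        exact fun hrx => absurd (Fin.ext hrx) hr
      · simp
    · simp [localTensor, h]
  | node ts =>
    rw [interm]
    simp [localTensor]

theorem interm_congr {W₁ W₂ : ∀ ν : MTree N, Fin (R ν) → ℕ → ℝ} {t : MTree N}
    (h : ∀ ρ ∈ t.nodes, W₁ ρ = W₂ ρ) : interm D R W₁ t = interm D R W₂ t := by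
  induction t using MTree.induction with
  | leaf i =>
    funext k x
    rw [interm, interm, h _ (mem_nodes_self _)]
  | node ts ih =>
    funext k x
    rw [interm_eq_sum_localTensor, interm_eq_sum_localTensor, h _ (mem_nodes_self _)]
    refine Finset.sum_congr rfl fun r _ => congrArg _ (congrArg List.prod ?_)
    refine List.map_congr_left fun t ht => ?_
    have hρ (ρ) (hρ : ρ ∈ t.nodes) := h ρ (mem_nodes_trans hρ (mem_nodes_of_mem_children ht))
    rw [ih t ht hρ]

theorem localTensor_replace_self (W : ∀ ν : MTree N, Fin (R ν) → ℕ → ℝ) (μ : MTree N)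
    (A : Fin (R μ) → ℕ → ℝ) : localTensor D R (replace R W μ A) μ = localTensor D R W μ := by
  cases μ with
  | leaf i => rfl
  | node ts =>
    funext r x
    refine congrArg List.prod (List.map_congr_left fun t ht => ?_)
    refine congrFun (congrFun (interm_congr fun ρ hρ => replace_ne W _ A ?_) r) x
    exact fun h => notMem_nodes_of_mem_children ht (h ▸ hρ)

theorem interm_replace_self (W : ∀ ν : MTree N, Fin (R ν) → ℕ → ℝ) (μ : MTree N)
    (A : Fin (R μ) → ℕ → ℝ) (k : ℕ) (x : Idx D) :
    interm D R (replace R W μ A) μ k x = ∑ r, A r k * localTensor D R W μ r x := by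
  rw [interm_eq_sum_localTensor, replace_self, localTensor_replace_self]

theorem localTensor_eq_interm_mul {W W' : ∀ ν : MTree N, Fin (R ν) → ℕ → ℝ} {ν c : MTree N}
    (hν : ν.WellFormed) (hc : c ∈ ν.children) (hW : ∀ ρ ∉ c.nodes, W' ρ = W ρ)
    (r : ℕ) (x : Idx D) :
    localTensor D R W' ν r x
      = interm D R W' c r x * ((ν.children.erase c).map fun e => interm D R W e r x).prod := by
  cases ν with
  | leaf i => simp [children] at hc
  | node ts =>
    rw [children] at hc ⊢
    rw [localTensor, ← List.prod_map_erase _ hc]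
    refine congrArg _ (congrArg List.prod (List.map_congr_left fun e he => ?_))
    obtain ⟨hec, he⟩ := hν.nodup_children.mem_erase_iff.1 he
    have hWe (ρ) (hρ : ρ ∈ e.nodes) := hW ρ (hν.notMem_nodes_of_ne he hc hec hρ)
    rw [interm_congr hWe]

theorem exists_endT_eq_sum_interm (W : ∀ ν : MTree N, Fin (R ν) → ℕ → ℝ) {T μ : MTree N}
    (hT : T.WellFormed) (hμ : μ ∈ T.nodes) :
    ∃ a : Fin (Rpar R T μ) → Idx D → ℝ, ∀ W' : ∀ ν : MTree N, Fin (R ν) → ℕ → ℝ,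
      (∀ ρ ∉ μ.nodes, W' ρ = W ρ) → ∀ x, endT D R W' T x = ∑ k, a k x * interm D R W' μ k x := by
  refine nodes_induction ?_ ?_ μ hμ
  · have h0 : 0 < Rpar R T T := by rw [Rpar_self]; exact one_pos
    refine ⟨fun k _ => if (k : ℕ) = 0 then 1 else 0, fun W' _ x => ?_⟩
    rw [Finset.sum_eq_single ⟨0, h0⟩]
    · simp [endT]
    · intro k _ hk
      simp [show (k : ℕ) ≠ 0 from fun h => hk (Fin.ext h)]
    · simp
  · rintro ν hνT ⟨a, ha⟩ c hc
    have hR := Rpar_of_mem_children R hT hνT hc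
    refine ⟨fun j x => ∑ k, a k x * W ν (Fin.cast hR j) k *
      ((ν.children.erase c).map fun e => interm D R W e j x).prod, fun W' hW' x => ?_⟩
    have hWν (ρ) (hρ : ρ ∉ ν.nodes) : W' ρ = W ρ :=
      hW' ρ fun h => hρ (mem_nodes_trans h (mem_nodes_of_mem_children hc))
    calc endT D R W' T x = ∑ k, a k x * interm D R W' ν k x := ha W' hWν x
      _ = ∑ r : Fin (R ν), (∑ k, a k x * W ν r k *
            ((ν.children.erase c).map fun e => interm D R W e r x).prod) * interm D R W' c r x := by
        simp_rw [interm_eq_sum_localTensor W' ν, hW' ν (notMem_nodes_of_mem_children hc),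
          localTensor_eq_interm_mul (hT.of_mem_nodes hνT) hc hW', Finset.mul_sum, Finset.sum_mul]
        rw [Finset.sum_comm]
        exact Finset.sum_congr rfl fun r _ => Finset.sum_congr rfl fun k _ => by ring
      _ = _ := (Fin.sum_congr' _ hR).symm

theorem exists_endT_replace_eq_sum (W : ∀ ν : MTree N, Fin (R ν) → ℕ → ℝ) {T μ : MTree N}
    (hT : T.WellFormed) (hμ : μ ∈ T.nodes) :
    ∃ g : Fin (R μ) → Fin (Rpar R T μ) → Idx D → ℝ, ∀ (A : Fin (R μ) → ℕ → ℝ) x,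
      endT D R (replace R W μ A) T x = ∑ i, ∑ j : Fin (Rpar R T μ), A i j * g i j x := by
  obtain ⟨a, ha⟩ := exists_endT_eq_sum_interm W hT hμ
  refine ⟨fun i j x => a j x * localTensor D R W μ i x, fun A x => ?_⟩
  rw [ha _ (fun ρ hρ => replace_ne W μ A fun h => hρ (h ▸ mem_nodes_self μ)) x]
  simp_rw [interm_replace_self, Finset.mul_sum]
  rw [Finset.sum_comm]
  exact Finset.sum_congr rfl fun i _ => Finset.sum_congr rfl fun j _ => by ring

theorem interm_replace_padRow_self (W : ∀ ν : MTree N, Fin (R ν) → ℕ → ℝ) (ν : MTree N)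
    (r : Fin (R ν)) (k : ℕ) (x : Idx D) :
    interm D R (replace R W ν (padRow R W ν r)) ν k x = W ν r k * localTensor D R W ν r x := by
  rw [interm_replace_self, Finset.sum_eq_single r]
  · simp [padRow]
  · intro i _ hi
    simp [padRow, Fin.val_ne_of_ne hi]
  · simp

theorem interm_replace_padCol_self (W : ∀ ν : MTree N, Fin (R ν) → ℕ → ℝ) (c : MTree N)
    (r k : ℕ) (x : Idx D) :
    interm D R (replace R W c (padCol R W c r)) c k x = if k = r then interm D R W c k x else 0 := by
  rw [interm_replace_self, interm_eq_sum_localTensor]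
  by_cases hk : k = r
  · subst hk
    simp [padCol]
  · simp [padCol, hk]

theorem interm_replace_padCol_parent (W : ∀ ν : MTree N, Fin (R ν) → ℕ → ℝ) {ν c : MTree N}
    (hν : ν.WellFormed) (hc : c ∈ ν.children) (r : Fin (R ν)) (k : ℕ) (x : Idx D) :
    interm D R (replace R W c (padCol R W c r)) ν k x = W ν r k * localTensor D R W ν r x := by
  have hνc : ν ≠ c := fun h => notMem_nodes_of_mem_children hc (h ▸ mem_nodes_self c)
  have hW' (ρ) (hρ : ρ ∉ c.nodes) : replace R W c (padCol R W c r) ρ = W ρ :=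
    replace_ne W c _ fun h => hρ (h ▸ mem_nodes_self c)
  rw [interm_eq_sum_localTensor, replace_ne W c _ hνc, Finset.sum_eq_single r]
  · rw [localTensor_eq_interm_mul hν hc hW', localTensor_eq_interm_mul hν hc (fun _ _ => rfl),
      interm_replace_padCol_self, if_pos rfl]
  · intro r' _ hr'
    rw [localTensor_eq_interm_mul hν hc hW', interm_replace_padCol_self,
      if_neg (Fin.val_ne_of_ne hr'), zero_mul, mul_zero]
  · simp

theorem endT_replace_padRow_eq_padCol (W : ∀ ν : MTree N, Fin (R ν) → ℕ → ℝ) {T ν c : MTree N}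
    (hT : T.WellFormed) (hν : ν ∈ T.nodes) (hc : c ∈ ν.children) (r : Fin (R ν)) :
    endT D R (replace R W ν (padRow R W ν r)) T = endT D R (replace R W c (padCol R W c r)) T := by
  obtain ⟨a, ha⟩ := exists_endT_eq_sum_interm W hT hν
  funext x
  rw [ha _ (fun ρ hρ => replace_ne W ν _ fun h => hρ (h ▸ mem_nodes_self ν)) x,
    ha _ (fun ρ hρ => replace_ne W c _ fun h => hρ (h ▸ mem_nodes_of_mem_children hc)) x]
  simp_rw [interm_replace_padRow_self, interm_replace_padCol_parent W (hT.of_mem_nodes hν) hc]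

theorem tgrad_eq_fderiv (hL : Differentiable ℝ L) (F : Idx D → ℝ) (x : Idx D) :
    tgrad D L F x = fderiv ℝ L F (Pi.single x 1) :=
  ((hL F).hasFDerivAt.comp_hasDerivAt_of_eq (F x) (hasDerivAt_update F x (F x))
    (Function.update_eq_self x F).symm).deriv

theorem fderiv_apply_eq_tinner (hL : Differentiable ℝ L) (F G : Idx D → ℝ) :
    fderiv ℝ L F G = tinner D (tgrad D L F) G := by
  conv_lhs => rw [← Finset.univ_sum_single G]
  rw [map_sum, tinner]
  refine Finset.sum_congr rfl fun x _ => ?_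
  have hsingle : Pi.single x (G x) = G x • (Pi.single x 1 : Idx D → ℝ) := by
    rw [← Pi.single_smul, smul_eq_mul, mul_one]
  rw [tgrad_eq_fderiv hL, hsingle, map_smul, smul_eq_mul, mul_comm]

section Gradient

variable {T : MTree N} {W : ∀ ν : MTree N, Fin (R ν) → ℕ → ℝ}

theorem went_coe (ν : MTree N) (i : Fin (R ν)) (j : ℕ) : went R W ν i j = W ν i j := by
  simp [went]

theorem dObj_eq_tinner (hL : Differentiable ℝ L) {μ : MTree N}
    {g : Fin (R μ) → Fin (Rpar R T μ) → Idx D → ℝ}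
    (hg : ∀ (A : Fin (R μ) → ℕ → ℝ) x,
      endT D R (replace R W μ A) T x = ∑ i, ∑ j : Fin (Rpar R T μ), A i j * g i j x)
    (i : Fin (R μ)) (j : Fin (Rpar R T μ)) :
    dObj D L R T W μ i j = tinner D (tgrad D L (endT D R W T)) (g i j) := by
  have hline (s : ℝ) : endT D R (upd R W μ i j s) T = endT D R W T + (s - W μ i j) • g i j := by
    funext x
    have h0 := hg (W μ) x
    rw [replace_eq_self] at h0
    rw [upd_eq_replace, hg, Pi.add_apply, Pi.smul_apply, smul_eq_mul, h0, ← sub_eq_iff_eq_add',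
      ← Finset.sum_sub_distrib, Finset.sum_eq_single i, ← Finset.sum_sub_distrib,
      Finset.sum_eq_single j]
    · simp [sub_mul]
    · intro j' _ hj'
      simp [Fin.val_ne_of_ne hj']
    · simp
    · intro i' _ hi'
      simp [Fin.val_ne_of_ne hi']
    · simp
  have hpath : HasDerivAt (fun s : ℝ => endT D R W T + (s - W μ i j) • g i j) (g i j) (W μ i j) := by
    simpa using (((hasDerivAt_id _).sub_const (W μ i j)).smul_const (g i j)).const_add
      (endT D R W T)
  have hd : HasDerivAt (fun s => obj D L R T (upd R W μ i j s))
      (fderiv ℝ L (endT D R W T) (g i j)) (W μ i j) := by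
    simp_rw [obj, hline]
    exact (hL _).hasFDerivAt.comp_hasDerivAt_of_eq _ hpath (by simp)
  rw [dObj, went_coe, hd.deriv, fderiv_apply_eq_tinner hL]

theorem sum_mul_dObj_eq_tinner (hL : Differentiable ℝ L) (hT : T.WellFormed) {μ : MTree N}
    (hμ : μ ∈ T.nodes) (A : Fin (R μ) → ℕ → ℝ) :
    ∑ i, ∑ j : Fin (Rpar R T μ), A i j * dObj D L R T W μ i j
      = tinner D (tgrad D L (endT D R W T)) (endT D R (replace R W μ A) T) := by
  obtain ⟨g, hg⟩ := exists_endT_replace_eq_sum (D := D) W hT hμ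
  simp_rw [dObj_eq_tinner hL hg, tinner, hg, Finset.mul_sum]
  rw [Finset.sum_congr rfl fun i _ => Finset.sum_comm, Finset.sum_comm]
  exact Finset.sum_congr rfl fun x _ => Finset.sum_congr rfl fun i _ =>
    Finset.sum_congr rfl fun j _ => by ring

theorem sum_row_mul_dObj (hL : Differentiable ℝ L) (hT : T.WellFormed) {ν : MTree N}
    (hν : ν ∈ T.nodes) (r : Fin (R ν)) :
    ∑ j : Fin (Rpar R T ν), W ν r j * dObj D L R T W ν r j
      = tinner D (tgrad D L (endT D R W T)) (endT D R (replace R W ν (padRow R W ν r)) T) := by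
  rw [← sum_mul_dObj_eq_tinner hL hT hν, Finset.sum_eq_single r]
  · simp [padRow]
  · intro i _ hi
    simp [padRow, Fin.val_ne_of_ne hi]
  · simp

theorem sum_col_mul_dObj (hL : Differentiable ℝ L) (hT : T.WellFormed) {ν c : MTree N}
    (hν : ν ∈ T.nodes) (hc : c ∈ ν.children) (r : Fin (R ν)) :
    ∑ i : Fin (R c), W c i r * dObj D L R T W c i r
      = tinner D (tgrad D L (endT D R W T)) (endT D R (replace R W c (padCol R W c r)) T) := by
  have hr : (r : ℕ) < Rpar R T c := by
    rw [Rpar_of_mem_children R hT hν hc]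
    exact r.2
  rw [← sum_mul_dObj_eq_tinner hL hT (mem_nodes_trans (mem_nodes_of_mem_children hc) hν)]
  refine Finset.sum_congr rfl fun i _ => ?_
  rw [Finset.sum_eq_single ⟨r, hr⟩]
  · simp [padCol]
  · intro j _ hj
    simp [padCol, show (j : ℕ) ≠ r from fun h => hj (Fin.ext h)]
  · simp

end Gradient

section Flow

variable {T : MTree N}

theorem rowSq_eq_sum (W : ∀ ν : MTree N, Fin (R ν) → ℕ → ℝ) (ν : MTree N) (r : Fin (R ν)) :
    rowSq R W T ν r = ∑ j : Fin (Rpar R T ν), W ν r j ^ 2 := by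
  simp [rowSq, went_coe]

theorem hasDerivAt_sum_sq {ι : Type*} (s : Finset ι) {f : ι → ℝ → ℝ} {f' : ι → ℝ} {u : ℝ}
    (h : ∀ i ∈ s, HasDerivAt (f i) (f' i) u) :
    HasDerivAt (fun v => ∑ i ∈ s, f i v ^ 2) (2 * ∑ i ∈ s, f i u * f' i) u := by
  refine (HasDerivAt.fun_sum fun i hi => (h i hi).pow 2).congr_deriv ?_
  rw [Finset.mul_sum]
  exact Finset.sum_congr rfl fun i _ => by push_cast; ring

theorem rowSq_sub_colSq_eq (hL : Differentiable ℝ L) (hT : T.WellFormed)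
    {Wt : ℝ → ∀ ν : MTree N, Fin (R ν) → ℕ → ℝ} (hflow : GradFlow D L R T Wt)
    {ν c : MTree N} (hν : ν ∈ T.nodes) (hc : c ∈ ν.children) (r : Fin (R ν))
    {t : ℝ} (ht : 0 ≤ t) :
    rowSq R (Wt t) T ν r - colSq R (Wt t) c r = rowSq R (Wt 0) T ν r - colSq R (Wt 0) c r := by
  have hderiv (u : ℝ) (hu : 0 ≤ u) :
      HasDerivAt (fun v => rowSq R (Wt v) T ν r - colSq R (Wt v) c r) 0 u := by
    have hrow := hasDerivAt_sum_sq Finset.univ fun (j : Fin (Rpar R T ν)) _ => hflow ν r j u hu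
    have hcol := hasDerivAt_sum_sq Finset.univ fun (i : Fin (R c)) _ => hflow c i r u hu
    have hbal : ∑ j : Fin (Rpar R T ν), Wt u ν r j * dObj D L R T (Wt u) ν r j
        = ∑ i : Fin (R c), Wt u c i r * dObj D L R T (Wt u) c i r := by
      rw [sum_row_mul_dObj hL hT hν, sum_col_mul_dObj hL hT hν hc,
        endT_replace_padRow_eq_padCol _ hT hν hc]
    simp_rw [rowSq_eq_sum, colSq]
    refine (hrow.sub hcol).congr_deriv ?_
    simp only [mul_neg, Finset.sum_neg_distrib, hbal, sub_self]
  exact constant_of_has_deriv_right_zero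
    (fun v hv => (hderiv v hv.1).continuousAt.continuousWithinAt)
    (fun v hv => (hderiv v hv.1).hasDerivWithinAt) t ⟨ht, le_rfl⟩

end Flow

end HTF

open HTF HTF.MTree in
theorem statement9_general {N : ℕ} (D : Fin N → ℕ) (L : (Idx D → ℝ) → ℝ)
    (hL : Differentiable ℝ L)
    (T : MTree N) (hT : T.Valid)
    (R : MTree N → ℕ)
    (Wt : ℝ → ∀ ν : MTree N, Fin (R ν) → ℕ → ℝ)
    (hflow : GradFlow D L R T Wt)
    (ν : MTree N) (hν : ν ∈ T.nodes) (r : Fin (R ν))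
    (t : ℝ) (ht : 0 ≤ t) :
    (∀ c ∈ ν.children,
      rowSq R (Wt t) T ν (r : ℕ) - colSq R (Wt t) c (r : ℕ)
        = rowSq R (Wt 0) T ν (r : ℕ) - colSq R (Wt 0) c (r : ℕ)) ∧
    (∀ c ∈ ν.children, ∀ c' ∈ ν.children,
      colSq R (Wt t) c (r : ℕ) - colSq R (Wt t) c' (r : ℕ)
        = colSq R (Wt 0) c (r : ℕ) - colSq R (Wt 0) c' (r : ℕ)) := by
  have hbalanced (c : MTree N) (hc : c ∈ ν.children) :=
    rowSq_sub_colSq_eq hL hT.wellFormed hflow hν hc r ht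
  exact ⟨hbalanced, fun c hc c' hc' => by linarith [hbalanced c hc, hbalanced c' hc']⟩

open HTF HTF.MTree in
/-- conservation law: under gradient flow, for every interior node
`ν` and `r ∈ [R_ν]`, the differences between the squared norms of the weight vectors in
the local component `LC(ν,r)` (the `r`'th row of `W^(ν)` and the `r`'th columns of the
children's weight matrices) are constant through time. -/
theorem statement9 {N : ℕ} (D : Fin N → ℕ) (L : (Idx D → ℝ) → ℝ)
    (hL : Differentiable ℝ L) (hLs : LocSmooth D L) (hL0 : ∀ A, 0 ≤ L A)
    (T : MTree N) (hT : T.Valid)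
    (R : MTree N → ℕ) (hR : ∀ i : Fin N, R (MTree.leaf i) = D i)
    (Wt : ℝ → ∀ ν : MTree N, Fin (R ν) → ℕ → ℝ)
    (hflow : GradFlow D L R T Wt)
    (ν : MTree N) (hν : ν ∈ T.nodes) (hint : ν.IsInterior) (r : Fin (R ν))
    (t : ℝ) (ht : 0 ≤ t) :
    (∀ c ∈ ν.children,
      rowSq R (Wt t) T ν (r : ℕ) - colSq R (Wt t) c (r : ℕ)
        = rowSq R (Wt 0) T ν (r : ℕ) - colSq R (Wt 0) c (r : ℕ)) ∧
    (∀ c ∈ ν.children, ∀ c' ∈ ν.children,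
      colSq R (Wt t) c (r : ℕ) - colSq R (Wt t) c' (r : ℕ)
        = colSq R (Wt 0) c (r : ℕ) - colSq R (Wt 0) c' (r : ℕ)) :=
  statement9_general D L hL T hT R Wt hflow ν hν r t ht
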